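/- Let q(x,ξ) = (1/2) c(x) ξ² + 2 ∫_{(0,∞)} (1 − cos(ξ y)) ν(x,dy) be a one-dimensional symmetric symbol (bounded c ≥ 0, Lévy kernel ν with sup_x ∫ min{1,y²} ν(x,dy) < ∞), and set N(x,y) := ν(x, (y,∞)) for x ∈ ℝ, y > 0. Then: (a) if ∫_ρ^∞ ( sup_{x∈ℝ} ∫_0^r y N(x,y) dy )^{-1} dr = ∞ for some ρ > 0, then there exists r > 0 with ∫_{{|ξ|<r}} dξ / sup_{x∈ℝ} q(x,ξ) = ∞; (b) if there exists r > 0 with ∫_{{|ξ|<r}} dξ / inf_{x∈ℝ} q(x,ξ) < ∞, then ∫_ρ^∞ ( inf_{x∈ℝ} ∫_0^r y N(x,y) dy )^{-1} dr < ∞ for all sufficiently large ρ > 0. -/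

import Mathlib

open MeasureTheory Filter Topology
open scoped ENNReal

/-- A one-dimensional symmetric symbol:
`q(x,ξ) = (1/2)c(x)ξ² + 2∫_{(0,∞)} (1 − cos(ξy)) ν(x,dy)`, valued in `[0,∞]`. -/
noncomputable def oneDimSymbol (c : ℝ → ℝ) (ν : ℝ → MeasureTheory.Measure ℝ)
    (x ξ : ℝ) : ℝ≥0∞ :=
  ENNReal.ofReal ((1 / 2) * c x * ξ ^ 2) +
    2 * ∫⁻ y in Set.Ioi (0 : ℝ), ENNReal.ofReal (1 - Real.cos (ξ * y)) ∂(ν x)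

/-! Writing `G_x(r) = ∫₀ʳ y N(x,y) dy`, the layer cake formula gives
`G_x(r) = ∫ min(r,z)²/2 ν(x,dz)`, and `1 - cos u ≤ 2 min(1,|u|)²` then yields
`q(x, 1/s) ≤ 8 s⁻² (K/16 + G_x(s))` for `c ≤ K`. The substitution `ξ = 1/s` turns
`∫_{0<ξ<1/ρ} dξ / q(ξ)` into `∫_{s>ρ} ds / (s² q(1/s))`, so both parts reduce to comparing
`∫_{s>ρ} ds / G(s)` with `∫_{s>ρ} ds / (K/16 + G(s))` for the nondecreasing `G = sup_x G_x`,
resp. `G = inf_x G_x`: the second integral diverges unless `G` eventually exceeds `K/16`, and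
from then on the two integrands agree up to a factor `2`. The scaling `G(r) ≤ (r/ρ)² G(ρ)`
excludes that `G` vanishes at `ρ` without vanishing identically. -/

open Set

noncomputable def tailIntegral (μ : Measure ℝ) (r : ℝ) : ℝ≥0∞ :=
  ∫⁻ y in Ioc 0 r, ENNReal.ofReal y * μ (Ioi y)

lemma tailIntegral_mono (μ : Measure ℝ) : Monotone (tailIntegral μ) :=
  fun _ _ h => lintegral_mono_set (Ioc_subset_Ioc_right h)

lemma tailIntegral_eq_lintegral_min_sq (μ : Measure ℝ) {r : ℝ} (hr : 0 ≤ r) :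
    tailIntegral μ r = ∫⁻ z in Ioi 0, ENNReal.ofReal (min r z ^ 2 / 2) ∂μ := by
  have hcake := lintegral_comp_eq_lintegral_meas_lt_mul (μ.restrict (Ioi 0))
    (f := fun z => min r z) (g := id)
    ((ae_restrict_iff' measurableSet_Ioi).2 (ae_of_all _ fun z hz => le_min hr (le_of_lt hz)))
    (by fun_prop) (fun t _ => continuous_id.intervalIntegrable _ _)
    ((ae_restrict_iff' measurableSet_Ioi).2 (ae_of_all _ fun t ht => le_of_lt ht))
  have hlevel : ∀ t ∈ Ioi (0 : ℝ), μ.restrict (Ioi 0) {z | t < min r z} * ENNReal.ofReal t =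
      (Iio r).indicator (fun t => ENNReal.ofReal t * μ (Ioi t)) t := by
    intro t ht
    rw [Measure.restrict_apply (measurableSet_lt measurable_const (by fun_prop)), mul_comm]
    by_cases htr : t < r
    · have hset : {z | t < min r z} ∩ Ioi 0 = Ioi t := by
        ext z
        simp only [mem_inter_iff, lt_min_iff, mem_Ioi]
        exact ⟨fun h => h.1.2, fun h => ⟨⟨htr, h⟩, lt_trans ht h⟩⟩
      rw [indicator_of_mem (mem_Iio.2 htr), hset]
    · have hset : {z | t < min r z} ∩ Ioi 0 = ∅ := by
        ext z
        simp only [mem_inter_iff, lt_min_iff, mem_empty_iff_false, iff_false]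
        exact fun h => htr h.1.1
      rw [indicator_of_notMem (fun h => htr (mem_Iio.1 h)), hset, measure_empty, mul_zero]
  calc tailIntegral μ r
      = ∫⁻ t in Ioi 0, (Iio r).indicator (fun t => ENNReal.ofReal t * μ (Ioi t)) t := by
        rw [lintegral_indicator measurableSet_Iio, Measure.restrict_restrict measurableSet_Iio,
          Iio_inter_Ioi, tailIntegral, Measure.restrict_congr_set Ioo_ae_eq_Ioc]
    _ = ∫⁻ t in Ioi 0, μ.restrict (Ioi 0) {z | t < min r z} * ENNReal.ofReal t :=
        (setLIntegral_congr_fun measurableSet_Ioi hlevel).symm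
    _ = ∫⁻ z in Ioi 0, ENNReal.ofReal (min r z ^ 2 / 2) ∂μ := by
        simpa [integral_id] using hcake.symm

lemma min_le_div_mul_min {ρ r z : ℝ} (hρ : 0 < ρ) (hρr : ρ ≤ r) (hz : 0 < z) :
    min r z ≤ r / ρ * min ρ z := by
  rcases le_total z ρ with hzρ | hρz
  · rw [min_eq_right (hzρ.trans hρr), min_eq_right hzρ]
    exact le_mul_of_one_le_left hz.le ((one_le_div hρ).2 hρr)
  · rw [min_eq_left hρz, div_mul_cancel₀ r hρ.ne']
    exact min_le_left r z

lemma tailIntegral_le_sq_div_mul (μ : Measure ℝ) {ρ r : ℝ} (hρ : 0 < ρ) (hρr : ρ ≤ r) :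
    tailIntegral μ r ≤ ENNReal.ofReal ((r / ρ) ^ 2) * tailIntegral μ ρ := by
  rw [tailIntegral_eq_lintegral_min_sq μ (hρ.le.trans hρr),
    tailIntegral_eq_lintegral_min_sq μ hρ.le,
    ← lintegral_const_mul' _ _ ENNReal.ofReal_ne_top]
  refine setLIntegral_mono' measurableSet_Ioi fun z hz => ?_
  rw [← ENNReal.ofReal_mul (sq_nonneg _), ← mul_div_assoc, ← mul_pow]
  gcongr
  · exact le_min (hρ.le.trans hρr) hz.le
  · exact min_le_div_mul_min hρ hρr hz

lemma iSup_tailIntegral_eq_zero {ι : Sort*} {μ : ι → Measure ℝ} {ρ r : ℝ} (hρ : 0 < ρ)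
    (hρr : ρ ≤ r) (h : ⨆ i, tailIntegral (μ i) ρ = 0) : ⨆ i, tailIntegral (μ i) r = 0 := by
  rw [ENNReal.iSup_eq_zero] at h ⊢
  intro i
  simpa [h i] using tailIntegral_le_sq_div_mul (μ i) hρ hρr

lemma one_sub_cos_le {s : ℝ} (hs : 0 < s) (y : ℝ) :
    1 - Real.cos (s⁻¹ * y) ≤ 4 * (s ^ 2)⁻¹ * (min s y ^ 2 / 2) := by
  rcases le_total y s with hys | hsy
  · rw [min_eq_right hys]
    have hcos := Real.one_sub_sq_div_two_le_cos (x := s⁻¹ * y)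
    have hsq : (s⁻¹ * y) ^ 2 / 2 ≤ 4 * (s ^ 2)⁻¹ * (y ^ 2 / 2) := by
      rw [mul_pow, inv_pow]; nlinarith [sq_nonneg y, inv_nonneg.2 (sq_nonneg s)]
    linarith
  · rw [min_eq_left hsy]
    have htwo : 4 * (s ^ 2)⁻¹ * (s ^ 2 / 2) = 2 := by field_simp; ring
    linarith [Real.neg_one_le_cos (s⁻¹ * y)]

lemma oneDimSymbol_inv_le {c : ℝ → ℝ} {ν : ℝ → Measure ℝ} {K : ℝ} (hK : ∀ x, c x ≤ K)
    (x : ℝ) {s : ℝ} (hs : 0 < s) :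
    oneDimSymbol c ν x s⁻¹ ≤
      8 * ENNReal.ofReal (s ^ 2)⁻¹ * (ENNReal.ofReal (K / 16) + tailIntegral (ν x) s) := by
  have hdiffusion : ENNReal.ofReal ((1 / 2) * c x * s⁻¹ ^ 2) ≤
      8 * ENNReal.ofReal (s ^ 2)⁻¹ * ENNReal.ofReal (K / 16) := by
    rw [← ENNReal.ofReal_ofNat, ← ENNReal.ofReal_mul (by norm_num),
      ← ENNReal.ofReal_mul (by positivity), inv_pow]
    refine ENNReal.ofReal_le_ofReal ?_
    nlinarith [hK x, inv_nonneg.2 (sq_nonneg s)]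
  have hjump : ∫⁻ y in Ioi 0, ENNReal.ofReal (1 - Real.cos (s⁻¹ * y)) ∂(ν x) ≤
      ENNReal.ofReal (4 * (s ^ 2)⁻¹) * tailIntegral (ν x) s := by
    rw [tailIntegral_eq_lintegral_min_sq _ hs.le, ← lintegral_const_mul' _ _ ENNReal.ofReal_ne_top]
    refine lintegral_mono fun y => ?_
    rw [← ENNReal.ofReal_mul (by positivity)]
    exact ENNReal.ofReal_le_ofReal (one_sub_cos_le hs y)
  calc oneDimSymbol c ν x s⁻¹
      ≤ 8 * ENNReal.ofReal (s ^ 2)⁻¹ * ENNReal.ofReal (K / 16) +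
          2 * (ENNReal.ofReal (4 * (s ^ 2)⁻¹) * tailIntegral (ν x) s) := by
        unfold oneDimSymbol; gcongr
    _ = 8 * ENNReal.ofReal (s ^ 2)⁻¹ * (ENNReal.ofReal (K / 16) + tailIntegral (ν x) s) := by
        rw [ENNReal.ofReal_mul (by norm_num), ENNReal.ofReal_ofNat]
        ring

lemma iSup_oneDimSymbol_inv_le {c : ℝ → ℝ} {ν : ℝ → Measure ℝ} {K : ℝ} (hK : ∀ x, c x ≤ K)
    {s : ℝ} (hs : 0 < s) :
    ⨆ x, oneDimSymbol c ν x s⁻¹ ≤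
      8 * ENNReal.ofReal (s ^ 2)⁻¹ * (ENNReal.ofReal (K / 16) + ⨆ x, tailIntegral (ν x) s) :=
  iSup_le fun x => (oneDimSymbol_inv_le hK x hs).trans (by
    gcongr
    exact le_iSup (fun x => tailIntegral (ν x) s) x)

lemma iInf_oneDimSymbol_inv_le {c : ℝ → ℝ} {ν : ℝ → Measure ℝ} {K : ℝ} (hK : ∀ x, c x ≤ K)
    {s : ℝ} (hs : 0 < s) :
    ⨅ x, oneDimSymbol c ν x s⁻¹ ≤
      8 * ENNReal.ofReal (s ^ 2)⁻¹ * (ENNReal.ofReal (K / 16) + ⨅ x, tailIntegral (ν x) s) := by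
  rw [ENNReal.add_iInf, ENNReal.mul_iInf_of_ne (by simpa using hs.ne')
    (ENNReal.mul_ne_top (by norm_num) ENNReal.ofReal_ne_top)]
  exact iInf_mono fun x => oneDimSymbol_inv_le hK x hs

lemma ENNReal.inv_le_mul_inv_of_le_mul {a b c : ℝ≥0∞} (hc₀ : c ≠ 0) (hc : c ≠ ∞)
    (h : b ≤ c * a) : a⁻¹ ≤ c * b⁻¹ :=
  calc a⁻¹ = c * (c * a)⁻¹ := by
        rw [ENNReal.mul_inv (Or.inl hc₀) (Or.inl hc), ← mul_assoc, ENNReal.mul_inv_cancel hc₀ hc,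
          one_mul]
    _ ≤ c * b⁻¹ := by gcongr

lemma lintegral_Ioo_inv_eq {ρ : ℝ} (hρ : 0 < ρ) (g : ℝ → ℝ≥0∞) :
    ∫⁻ ξ in Ioo 0 ρ⁻¹, g ξ = ∫⁻ s in Ioi ρ, ENNReal.ofReal (s ^ 2)⁻¹ * g s⁻¹ := by
  have himage : (fun s : ℝ => s⁻¹) '' Ioi ρ = Ioo 0 ρ⁻¹ := by
    ext ξ
    constructor
    · rintro ⟨s, hs, rfl⟩
      exact ⟨inv_pos.2 (hρ.trans hs), inv_strictAnti₀ hρ hs⟩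
    · rintro ⟨hξ, hξρ⟩
      exact ⟨ξ⁻¹, by simpa using inv_strictAnti₀ hξ hξρ, inv_inv ξ⟩
  rw [← himage, lintegral_image_eq_lintegral_deriv_mul_of_antitoneOn measurableSet_Ioi
    (fun s hs => (hasDerivAt_inv (hρ.trans hs).ne').hasDerivWithinAt)
    (fun a ha _ _ hab => inv_anti₀ (hρ.trans ha) hab)]
  simp only [neg_neg]

lemma lintegral_Ioi_inv_le_lintegral_ball_inv {Q H : ℝ → ℝ≥0∞} {C : ℝ≥0∞} (hC₀ : C ≠ 0)
    (hC : C ≠ ∞) {ρ : ℝ} (hρ : 0 < ρ)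
    (hQ : ∀ s > ρ, Q s⁻¹ ≤ C * ENNReal.ofReal (s ^ 2)⁻¹ * H s) :
    ∫⁻ s in Ioi ρ, (H s)⁻¹ ≤ C * ∫⁻ ξ in Metric.ball 0 ρ⁻¹, (Q ξ)⁻¹ :=
  calc ∫⁻ s in Ioi ρ, (H s)⁻¹
      ≤ ∫⁻ s in Ioi ρ, C * (ENNReal.ofReal (s ^ 2)⁻¹ * (Q s⁻¹)⁻¹) := by
        refine setLIntegral_mono' measurableSet_Ioi fun s hs => ?_
        have hs₀ : 0 < s := hρ.trans hs
        rw [← mul_assoc]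
        exact ENNReal.inv_le_mul_inv_of_le_mul
          (mul_ne_zero hC₀ (by simpa using hs₀.ne')) (ENNReal.mul_ne_top hC ENNReal.ofReal_ne_top)
          (hQ s hs)
    _ = C * ∫⁻ ξ in Ioo 0 ρ⁻¹, (Q ξ)⁻¹ := by
        rw [lintegral_const_mul' _ _ hC, lintegral_Ioo_inv_eq hρ]
    _ ≤ C * ∫⁻ ξ in Metric.ball 0 ρ⁻¹, (Q ξ)⁻¹ := by
        gcongr
        rw [Real.ball_eq_Ioo, zero_sub, zero_add]
        exact Ioo_subset_Ioo_left (neg_nonpos.2 (inv_pos.2 hρ).le)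

lemma exists_lintegral_Ioi_inv_lt_top {g : ℝ → ℝ≥0∞} (hg : Monotone g) {a : ℝ≥0∞} (ha : a ≠ ∞)
    {ρ : ℝ} (h : ∫⁻ s in Ioi ρ, (a + g s)⁻¹ < ∞) :
    ∃ s₀ > ρ, g s₀ ≠ 0 ∧ ∫⁻ s in Ioi s₀, (g s)⁻¹ < ∞ := by
  obtain ⟨s₀, hs₀, hg₀, has₀⟩ : ∃ s₀ > ρ, g s₀ ≠ 0 ∧ a ≤ g s₀ := by
    by_contra! hsmall
    have hle : ∫⁻ _ in Ioi ρ, (a + a)⁻¹ ≤ ∫⁻ s in Ioi ρ, (a + g s)⁻¹ := by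
      refine setLIntegral_mono' measurableSet_Ioi fun s hs => ?_
      gcongr
      by_cases hgs : g s = 0
      · simp [hgs]
      · exact (hsmall s hs hgs).le
    rw [setLIntegral_const, Real.volume_Ioi,
      ENNReal.mul_top (ENNReal.inv_ne_zero.2 (ENNReal.add_ne_top.2 ⟨ha, ha⟩))] at hle
    exact h.ne (top_le_iff.1 hle)
  refine ⟨s₀, hs₀, hg₀, ?_⟩
  calc ∫⁻ s in Ioi s₀, (g s)⁻¹
      ≤ ∫⁻ s in Ioi s₀, 2 * (a + g s)⁻¹ := by
        refine setLIntegral_mono' measurableSet_Ioi fun s hs => ?_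
        refine ENNReal.inv_le_mul_inv_of_le_mul two_ne_zero ENNReal.ofNat_ne_top ?_
        rw [two_mul]
        gcongr
        exact has₀.trans (hg (le_of_lt hs))
    _ = 2 * ∫⁻ s in Ioi s₀, (a + g s)⁻¹ := lintegral_const_mul' _ _ ENNReal.ofNat_ne_top
    _ ≤ 2 * ∫⁻ s in Ioi ρ, (a + g s)⁻¹ := by gcongr
    _ < ∞ := ENNReal.mul_lt_top ENNReal.ofNat_lt_top h

lemma lintegral_Ioi_inv_add_eq_top {g : ℝ → ℝ≥0∞} (hg : Monotone g) {a : ℝ≥0∞} (ha : a ≠ ∞)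
    {ρ : ℝ} (hg₀ : g ρ = 0 → ∀ s > ρ, g s = 0) (h : ∫⁻ s in Ioi ρ, (g s)⁻¹ = ∞) :
    ∫⁻ s in Ioi ρ, (a + g s)⁻¹ = ∞ := by
  by_contra hfin
  obtain ⟨s₀, hs₀, hgs₀, hfar⟩ := exists_lintegral_Ioi_inv_lt_top hg ha (lt_top_iff_ne_top.2 hfin)
  have hgρ : g ρ ≠ 0 := fun h₀ => hgs₀ (hg₀ h₀ s₀ hs₀)
  have hnear : ∫⁻ s in Ioc ρ s₀, (g s)⁻¹ < ∞ :=
    calc ∫⁻ s in Ioc ρ s₀, (g s)⁻¹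
        ≤ ∫⁻ _ in Ioc ρ s₀, (g ρ)⁻¹ :=
          setLIntegral_mono' measurableSet_Ioc fun s hs => ENNReal.inv_le_inv' (hg hs.1.le)
      _ = (g ρ)⁻¹ * ENNReal.ofReal (s₀ - ρ) := by rw [setLIntegral_const, Real.volume_Ioc]
      _ < ∞ := ENNReal.mul_lt_top (ENNReal.inv_lt_top.2 (pos_iff_ne_zero.2 hgρ))
          ENNReal.ofReal_lt_top
  rw [← Ioc_union_Ioi_eq_Ioi hs₀.le, lintegral_union measurableSet_Ioi (Ioc_disjoint_Ioi le_rfl)]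
    at h
  exact (ENNReal.add_lt_top.2 ⟨hnear, hfar⟩).ne h

theorem stmt15_general (c : ℝ → ℝ) (ν : ℝ → MeasureTheory.Measure ℝ)
    (hcb : ∃ K : ℝ, ∀ x, c x ≤ K) :
    -- (a)
    ((∃ ρ > (0 : ℝ), ∫⁻ r in Set.Ioi ρ,
        (⨆ x, ∫⁻ y in Set.Ioc (0 : ℝ) r, ENNReal.ofReal y * ν x (Set.Ioi y))⁻¹ = ∞) →
      ∃ r > (0 : ℝ), ∫⁻ ξ in Metric.ball (0 : ℝ) r,
        (⨆ x, oneDimSymbol c ν x ξ)⁻¹ = ∞) ∧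
    -- (b)
    ((∃ r > (0 : ℝ), ∫⁻ ξ in Metric.ball (0 : ℝ) r,
        (⨅ x, oneDimSymbol c ν x ξ)⁻¹ < ∞) →
      ∃ ρ₀ > (0 : ℝ), ∀ ρ : ℝ, ρ₀ ≤ ρ →
        ∫⁻ r in Set.Ioi ρ,
          (⨅ x, ∫⁻ y in Set.Ioc (0 : ℝ) r, ENNReal.ofReal y * ν x (Set.Ioi y))⁻¹ < ∞) := by
  obtain ⟨K, hK⟩ := hcb
  have ha : ENNReal.ofReal (K / 16) ≠ ∞ := ENNReal.ofReal_ne_top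
  constructor
  · rintro ⟨ρ, hρ, h⟩
    have hsup := lintegral_Ioi_inv_add_eq_top (g := fun s => ⨆ x, tailIntegral (ν x) s)
      (fun _ _ hst => iSup_mono fun x => tailIntegral_mono _ hst) ha
      (fun h₀ s hs => iSup_tailIntegral_eq_zero hρ hs.le h₀) h
    have hcomp : ∫⁻ s in Ioi ρ, (ENNReal.ofReal (K / 16) + ⨆ x, tailIntegral (ν x) s)⁻¹ ≤
        8 * ∫⁻ ξ in Metric.ball 0 ρ⁻¹, (⨆ x, oneDimSymbol c ν x ξ)⁻¹ :=
      lintegral_Ioi_inv_le_lintegral_ball_inv (by norm_num) (by norm_num) hρ fun s hs =>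
        iSup_oneDimSymbol_inv_le hK (hρ.trans hs)
    rw [hsup, top_le_iff, ENNReal.mul_eq_top] at hcomp
    exact ⟨ρ⁻¹, inv_pos.2 hρ, by simpa using hcomp⟩
  · rintro ⟨r, hr, h⟩
    have hcomp : ∫⁻ s in Ioi r⁻¹, (ENNReal.ofReal (K / 16) + ⨅ x, tailIntegral (ν x) s)⁻¹ ≤
        8 * ∫⁻ ξ in Metric.ball 0 r⁻¹⁻¹, (⨅ x, oneDimSymbol c ν x ξ)⁻¹ :=
      lintegral_Ioi_inv_le_lintegral_ball_inv (by norm_num) (by norm_num) (inv_pos.2 hr)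
        fun s hs => iInf_oneDimSymbol_inv_le hK ((inv_pos.2 hr).trans hs)
    rw [inv_inv] at hcomp
    obtain ⟨s₀, hs₀, -, hfin⟩ := exists_lintegral_Ioi_inv_lt_top
      (g := fun s => ⨅ x, tailIntegral (ν x) s)
      (fun _ _ hst => iInf_mono fun x => tailIntegral_mono _ hst) ha
      (hcomp.trans_lt (ENNReal.mul_lt_top (by norm_num) h))
    exact ⟨s₀, (inv_pos.2 hr).trans hs₀, fun ρ hρ =>
      (lintegral_mono_set (Ioi_subset_Ioi hρ)).trans_lt hfin⟩

/-- sufficient conditions for the Chung–Fuchs conditions in terms of the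
tail function `N(x,y) = ν(x,(y,∞))` of the Lévy kernel. -/
theorem stmt15 (c : ℝ → ℝ) (ν : ℝ → MeasureTheory.Measure ℝ)
    (hc : ∀ x, 0 ≤ c x) (hcb : ∃ K : ℝ, ∀ x, c x ≤ K)
    (hν : (⨆ x, ∫⁻ y in Set.Ioi (0 : ℝ), ENNReal.ofReal (min 1 (y ^ 2)) ∂(ν x)) < ∞)
    (hms : Measurable fun ξ : ℝ => ⨆ x, oneDimSymbol c ν x ξ)
    (hmi : Measurable fun ξ : ℝ => ⨅ x, oneDimSymbol c ν x ξ)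
    (hmNs : Measurable fun r : ℝ =>
      ⨆ x, ∫⁻ y in Set.Ioc (0 : ℝ) r, ENNReal.ofReal y * ν x (Set.Ioi y))
    (hmNi : Measurable fun r : ℝ =>
      ⨅ x, ∫⁻ y in Set.Ioc (0 : ℝ) r, ENNReal.ofReal y * ν x (Set.Ioi y)) :
    -- (a)
    ((∃ ρ > (0 : ℝ), ∫⁻ r in Set.Ioi ρ,
        (⨆ x, ∫⁻ y in Set.Ioc (0 : ℝ) r, ENNReal.ofReal y * ν x (Set.Ioi y))⁻¹ = ∞) →
      ∃ r > (0 : ℝ), ∫⁻ ξ in Metric.ball (0 : ℝ) r,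
        (⨆ x, oneDimSymbol c ν x ξ)⁻¹ = ∞) ∧
    -- (b)
    ((∃ r > (0 : ℝ), ∫⁻ ξ in Metric.ball (0 : ℝ) r,
        (⨅ x, oneDimSymbol c ν x ξ)⁻¹ < ∞) →
      ∃ ρ₀ > (0 : ℝ), ∀ ρ : ℝ, ρ₀ ≤ ρ →
        ∫⁻ r in Set.Ioi ρ,
          (⨅ x, ∫⁻ y in Set.Ioc (0 : ℝ) r, ENNReal.ofReal y * ν x (Set.Ioi y))⁻¹ < ∞) :=
  stmt15_general c ν hcb
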